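/- arXiv:2204.09723 — 3 statements merged into one kernel-verified Lean document; each statement's English description precedes it below -/
import Mathlib

section
/- The function g : (0,1] → ℝ defined by g(t) = (1/2)·log₂( 4 t^t / (t+1)^{t+1} ) is strictly decreasing on (0,1]. -/
open Real Set

lemma strictAntiOn_mul_log_sub_add_one_mul_log_add_one :
    StrictAntiOn (fun t : ℝ => t * log t - (t + 1) * log (t + 1)) (Ici 0) := by
  refine strictAntiOn_of_deriv_neg (convex_Ici 0) (by fun_prop) fun x hx => ?_
  rw [interior_Ici] at hx
  have hx0 : 0 < x := hx
  have hderiv : HasDerivAt (fun t : ℝ => t * log t - (t + 1) * log (t + 1))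
      ((log x + 1) - (log (x + 1) + 1)) x := by
    have := (hasDerivAt_mul_log (x := x + 1) (by linarith)).comp x
      ((hasDerivAt_id x).add_const 1)
    rw [mul_one] at this
    exact (hasDerivAt_mul_log hx0.ne').sub this
  rw [hderiv.deriv]
  linarith [log_lt_log hx0 (lt_add_one x)]

lemma logb_two_four_mul_rpow_self_div {t : ℝ} (ht : 0 < t) :
    logb 2 (4 * t ^ t / (t + 1) ^ (t + 1)) =
      (log 4 + (t * log t - (t + 1) * log (t + 1))) / log 2 := by
  have ht1 : 0 < t + 1 := by linarith
  rw [logb, log_div (by positivity) (by positivity), log_mul (by norm_num) (by positivity),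
    log_rpow ht, log_rpow ht1, add_sub_assoc]

/-- The function `g(t) = (1/2)·log₂(4 t^t / (t+1)^{t+1})` is strictly decreasing on `(0,1]`. -/
theorem strictAntiOn_linEntropy_aux :
    StrictAntiOn
      (fun t : ℝ => (1 / 2) * Real.logb 2 (4 * t ^ t / (t + 1) ^ (t + 1)))
      (Set.Ioc 0 1) := by
  intro x hx y hy hxy
  simp only [logb_two_four_mul_rpow_self_div hx.1, logb_two_four_mul_rpow_self_div hy.1]
  have hf := strictAntiOn_mul_log_sub_add_one_mul_log_add_one hx.1.le hy.1.le hxy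
  have hlog2 : 0 < log 2 := log_pos one_lt_two
  gcongr
end

section
/- Let X be a finite nonempty alphabet of size N and let p be a probability distribution on X. Then H*(p) ≤ H*(U_N), where U_N is the uniform distribution on X, with equality if and only if p is uniform (p(x) = 1/N for all x). In particular, H* on distributions over X is maximized exactly at the uniform distribution. -/
/-- Lin entropy of a distribution on a finite alphabet. -/
noncomputable def linEntropy {X : Type*} [Fintype X] (p : X → ℝ) : ℝ :=
  ∑ x, p x * ((1 / 2) * Real.logb 2 (4 * p x ^ p x / (p x + 1) ^ (p x + 1)))

/-!
On `t ≥ 0` the summand of `linEntropy` is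
`g t = t + (t² log t - (t² + t) log (t + 1)) / (2 log 2)` (`linTerm`), and for `t > 0`
`g'' t = (2 log (t / (t + 1)) + 1 / (t + 1)) / (2 log 2) < 0` because
`log (t / (t + 1)) ≤ t / (t + 1) - 1 = -1 / (t + 1)`. So `g` is strictly concave on `[0, ∞)`, and
`∑ x, g (p x) ≤ N g (1 / N)` is Jensen's inequality with uniform weights, whose equality case
forces `p` to be constant.
-/

open Finset Real Set

section Jensen

variable {X : Type*} [Fintype X] [Nonempty X] {s : Set ℝ} {f : ℝ → ℝ} {p : X → ℝ}

theorem ConcaveOn.sum_map_le_card_mul_map_mean (hf : ConcaveOn ℝ s f) (hp : ∀ x, p x ∈ s) :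
    ∑ x, f (p x) ≤ Fintype.card X * f ((∑ x, p x) / Fintype.card X) := by
  have hn : (0 : ℝ) < Fintype.card X := by exact_mod_cast Fintype.card_pos
  have hw : ∑ _x : X, (Fintype.card X : ℝ)⁻¹ = 1 := by simp [hn.ne']
  have := hf.le_map_sum (fun _ _ => by positivity) hw fun x _ => hp x
  simp only [smul_eq_mul, inv_mul_eq_div, ← sum_div] at this
  rwa [div_le_iff₀ hn, mul_comm] at this

theorem StrictConcaveOn.sum_map_eq_card_mul_map_mean_iff (hf : StrictConcaveOn ℝ s f)
    (hp : ∀ x, p x ∈ s) :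
    ∑ x, f (p x) = Fintype.card X * f ((∑ x, p x) / Fintype.card X) ↔
      ∀ x, p x = (∑ y, p y) / Fintype.card X := by
  have hn : (0 : ℝ) < Fintype.card X := by exact_mod_cast Fintype.card_pos
  have hw : ∑ _x : X, (Fintype.card X : ℝ)⁻¹ = 1 := by simp [hn.ne']
  have := hf.map_sum_eq_iff_of_pos (fun _ _ => by positivity) hw fun x _ => hp x
  simp only [smul_eq_mul, inv_mul_eq_div, ← sum_div, Finset.mem_univ, forall_const] at this
  rw [eq_div_iff hn.ne', mul_comm] at this
  rw [eq_comm, this]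
  refine ⟨fun hconst x => ?_, fun hmean x y => by rw [hmean x, hmean y]⟩
  rw [eq_div_iff hn.ne', mul_comm, ← nsmul_eq_mul, ← card_univ, ← sum_const]
  exact (sum_congr rfl fun y _ => @hconst y x).symm

end Jensen

noncomputable def linTerm (t : ℝ) : ℝ :=
  t + (t ^ 2 * log t - (t ^ 2 + t) * log (t + 1)) / (2 * log 2)

noncomputable def linTermDeriv (t : ℝ) : ℝ :=
  1 + (2 * t * log t - (2 * t + 1) * log (t + 1)) / (2 * log 2)

theorem mul_half_logb_eq_linTerm {t : ℝ} (ht : 0 ≤ t) :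
    t * ((1 / 2) * logb 2 (4 * t ^ t / (t + 1) ^ (t + 1))) = linTerm t := by
  rcases ht.eq_or_lt with rfl | ht
  · simp [linTerm]
  have hlog : log (4 * t ^ t / (t + 1) ^ (t + 1))
      = 2 * log 2 + t * log t - (t + 1) * log (t + 1) := by
    rw [log_div (by positivity) (by positivity), log_mul (by norm_num) (by positivity),
      log_rpow ht, log_rpow (by positivity), show (4 : ℝ) = 2 ^ 2 by norm_num, log_pow]
    push_cast
    ring
  have : log 2 ≠ 0 := by positivity
  rw [logb, hlog, linTerm]
  field_simp
  ring

theorem linEntropy_eq_sum_linTerm {X : Type*} [Fintype X] {p : X → ℝ} (hp : ∀ x, 0 ≤ p x) :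
    linEntropy p = ∑ x, linTerm (p x) :=
  sum_congr rfl fun x _ => mul_half_logb_eq_linTerm (hp x)

theorem hasDerivAt_log_add_one {t : ℝ} (ht : t + 1 ≠ 0) :
    HasDerivAt (fun s => log (s + 1)) (t + 1)⁻¹ t :=
  ((hasDerivAt_id t).add_const 1).log ht |>.congr_deriv (one_div _)

theorem hasDerivAt_linTerm {t : ℝ} (ht : 0 < t) : HasDerivAt linTerm (linTermDeriv t) t := by
  have hlog₁ := hasDerivAt_log_add_one (t := t) (by positivity)
  have := (hasDerivAt_id t).add
    ((((hasDerivAt_pow 2 t).mul (hasDerivAt_log ht.ne')).sub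
      (((hasDerivAt_pow 2 t).add (hasDerivAt_id t)).mul hlog₁)).div_const (2 * log 2))
  refine this.congr_deriv ?_
  simp only [id, Pi.add_apply, linTermDeriv]
  field_simp
  ring

theorem hasDerivAt_linTermDeriv {t : ℝ} (ht : 0 < t) :
    HasDerivAt linTermDeriv ((2 * log t - 2 * log (t + 1) + (t + 1)⁻¹) / (2 * log 2)) t := by
  have hlog₁ := hasDerivAt_log_add_one (t := t) (by positivity)
  have := ((((hasDerivAt_id t).const_mul 2).mul (hasDerivAt_log ht.ne')).sub
    ((((hasDerivAt_id t).const_mul 2).add_const 1).mul hlog₁)).div_const (2 * log 2)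
      |>.const_add 1
  refine this.congr_deriv ?_
  simp only [id]
  field_simp
  ring

theorem two_mul_log_sub_log_add_one_add_inv_neg {t : ℝ} (ht : 0 < t) :
    2 * log t - 2 * log (t + 1) + (t + 1)⁻¹ < 0 := by
  have h1 : 0 < t + 1 := by positivity
  have hlog : log t - log (t + 1) ≤ -(t + 1)⁻¹ := by
    rw [← log_div ht.ne' h1.ne']
    convert log_le_sub_one_of_pos (div_pos ht h1) using 1
    field_simp
    ring
  have : 0 < (t + 1)⁻¹ := inv_pos.2 h1
  linarith

theorem strictAntiOn_linTermDeriv : StrictAntiOn linTermDeriv (Ioi 0) := by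
  refine strictAntiOn_of_deriv_neg (convex_Ioi 0)
    (fun t ht => (hasDerivAt_linTermDeriv ht).continuousAt.continuousWithinAt) fun t ht => ?_
  rw [interior_Ioi] at ht
  rw [(hasDerivAt_linTermDeriv ht).deriv]
  exact div_neg_of_neg_of_pos (two_mul_log_sub_log_add_one_add_inv_neg ht) (by positivity)

theorem continuousOn_linTerm : ContinuousOn linTerm (Ici 0) := by
  have hlog : ContinuousOn (fun t : ℝ => log (t + 1)) (Ici 0) :=
    ContinuousOn.log (by fun_prop) fun t (ht : 0 ≤ t) => by positivity
  have hsq : Continuous fun t : ℝ => t ^ 2 * log t :=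
    (continuous_id.mul continuous_mul_log).congr fun t => by simp only [Pi.mul_apply, id]; ring
  have hpoly : Continuous fun t : ℝ => t ^ 2 + t := by fun_prop
  exact continuousOn_id.add ((hsq.continuousOn.sub (hpoly.continuousOn.mul hlog)).div_const _)

theorem strictConcaveOn_linTerm : StrictConcaveOn ℝ (Ici 0) linTerm := by
  refine StrictAntiOn.strictConcaveOn_of_deriv (convex_Ici 0) continuousOn_linTerm ?_
  rw [interior_Ici]
  exact strictAntiOn_linTermDeriv.congr fun t ht => (hasDerivAt_linTerm ht).deriv.symm

/-- Maximality: on a finite nonempty alphabet of size `N`, Lin entropy is at most that of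
the uniform distribution, with equality iff the distribution is uniform. -/
theorem linEntropy_le_uniform
    {X : Type*} [Fintype X] [Nonempty X] (N : ℕ) (hN : Fintype.card X = N)
    (p : X → ℝ) (hp : ∀ x, 0 ≤ p x) (hsum : ∑ x, p x = 1) :
    linEntropy p ≤ linEntropy (fun _ : X => (1 : ℝ) / N) ∧
      (linEntropy p = linEntropy (fun _ : X => (1 : ℝ) / N) ↔
        ∀ x, p x = 1 / N) := by
  have hmean : (∑ x, p x) / Fintype.card X = 1 / N := by rw [hsum, hN]
  have huniform : linEntropy (fun _ : X => (1 : ℝ) / N) = N * linTerm (1 / N) := by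
    rw [linEntropy_eq_sum_linTerm fun _ => by positivity, sum_const, card_univ, hN, nsmul_eq_mul]
  rw [linEntropy_eq_sum_linTerm hp, huniform]
  have hle := strictConcaveOn_linTerm.concaveOn.sum_map_le_card_mul_map_mean hp
  have heq := strictConcaveOn_linTerm.sum_map_eq_card_mul_map_mean_iff hp
  rw [hmean, hN] at hle heq
  exact ⟨hle, heq⟩
end

section
/- Let X be a finite nonempty alphabet and p a probability distribution on X. Then 0 ≤ H*(p) ≤ 1. -/
/-!
For `t = p x ∈ [0, 1]` the summand is `t * c t` with
`(1 - c t) * log 4 = (t + 1) log (t + 1) - t log t`. This is nonnegative because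
`t log t ≤ 0 ≤ (t + 1) log (t + 1)`, and at most `2 log 2 - 1 log 1 = log 4` because the increments
of the convex function `x log x` over unit intervals grow. Hence `0 ≤ c t ≤ 1`, and
`0 ≤ H*(p) ≤ ∑ x, p x = 1`.
-/

open Real

theorem ConvexOn.map_add_sub_map_le_map_add_sub_map {𝕜 : Type*} [Field 𝕜] [LinearOrder 𝕜]
    [IsStrictOrderedRing 𝕜] {s : Set 𝕜} {f : 𝕜 → 𝕜} (hf : ConvexOn 𝕜 s f) {x y h : 𝕜}
    (hx : x ∈ s) (hyh : y + h ∈ s) (hxy : x ≤ y) (hh : 0 < h) :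
    f (x + h) - f x ≤ f (y + h) - f y := by
  rcases hxy.eq_or_lt with rfl | hxy
  · rfl
  have hslope := (hf.secant_mono_aux2 hx hyh (by linarith) (by linarith : x + h < y + h)).trans
    (hf.secant_mono_aux3 hx hyh hxy (by linarith : y < y + h))
  rwa [add_sub_cancel_left, add_sub_cancel_left, div_le_div_iff_of_pos_right hh] at hslope

theorem mul_log_add_one_sub_mul_log_le_log_four {t : ℝ} (h0 : 0 ≤ t) (h1 : t ≤ 1) :
    (t + 1) * log (t + 1) - t * log t ≤ log 4 := by
  have h := convexOn_mul_log.map_add_sub_map_le_map_add_sub_map h0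
    (by norm_num : (1 : ℝ) + 1 ∈ Set.Ici 0) h1 one_pos
  norm_num at h
  linarith [log_four_eq]

theorem mul_log_le_add_one_mul_log_add_one {t : ℝ} (h0 : 0 ≤ t) (h1 : t ≤ 1) :
    t * log t ≤ (t + 1) * log (t + 1) :=
  (mul_nonpos_of_nonneg_of_nonpos h0 (log_nonpos h0 h1)).trans
    (mul_nonneg (by linarith) (log_nonneg (by linarith)))

theorem log_four_mul_rpow_self_div {t : ℝ} (h0 : 0 ≤ t) :
    log (4 * t ^ t / (t + 1) ^ (t + 1)) = log 4 - ((t + 1) * log (t + 1) - t * log t) := by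
  rcases h0.eq_or_lt with rfl | hpos
  · simp
  rw [log_div (by positivity) (by positivity), log_mul (by norm_num) (by positivity),
    log_rpow hpos, log_rpow (by linarith)]
  ring

theorem half_logb_four_mul_rpow_self_div_mem_Icc {t : ℝ} (h0 : 0 ≤ t) (h1 : t ≤ 1) :
    (1 / 2) * logb 2 (4 * t ^ t / (t + 1) ^ (t + 1)) ∈ Set.Icc 0 1 := by
  have hlog2 : 0 < log 2 := log_pos one_lt_two
  have hupper := mul_log_add_one_sub_mul_log_le_log_four h0 h1
  have hlower := mul_log_le_add_one_mul_log_add_one h0 h1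
  rw [logb, log_four_mul_rpow_self_div h0]
  constructor
  · have : 0 ≤ log 4 - ((t + 1) * log (t + 1) - t * log t) := by linarith
    positivity
  · rw [log_four_eq] at hupper ⊢
    field_simp
    linarith

theorem linEntropy_nonneg_le_one_general
    {X : Type*} [Fintype X] (p : X → ℝ)
    (hp : ∀ x, 0 ≤ p x) (hsum : ∑ x, p x = 1) :
    0 ≤ linEntropy p ∧ linEntropy p ≤ 1 := by
  have hle_one : ∀ x, p x ≤ 1 := fun x =>
    hsum ▸ Finset.single_le_sum (fun y _ => hp y) (Finset.mem_univ x)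
  have hcoeff := fun x => half_logb_four_mul_rpow_self_div_mem_Icc (hp x) (hle_one x)
  refine ⟨Finset.sum_nonneg fun x _ => mul_nonneg (hp x) (hcoeff x).1, ?_⟩
  calc linEntropy p ≤ ∑ x, p x :=
        Finset.sum_le_sum fun x _ => mul_le_of_le_one_right (hp x) (hcoeff x).2
    _ = 1 := hsum

/-- Lin entropy is bounded between 0 and 1 on every finite nonempty alphabet. -/
theorem linEntropy_nonneg_le_one
    {X : Type*} [Fintype X] [Nonempty X] (p : X → ℝ)
    (hp : ∀ x, 0 ≤ p x) (hsum : ∑ x, p x = 1) :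
    0 ≤ linEntropy p ∧ linEntropy p ≤ 1 :=
  linEntropy_nonneg_le_one_general p hp hsum
end
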